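/- Let Σ, Λ ∈ Sym⁺(n,k) (PSD of rank k) with rank(ΣΛ) = k. Then XRY^T = Σ^{1/2}((Σ^{1/2}ΛΣ^{1/2})^{1/2})^− Σ^{1/2}Λ, where X = UD^{1/2}, Σ = UDU^T with U ∈ St(n,k), D diagonal positive, Y any full-rank factor of Λ (YY^T = Λ), H = (X^TΛX)^{1/2}, and R = H^{−1}X^TY; here M^− denotes the Moore-Penrose pseudoinverse. -/

import Mathlib

open Matrix

open Classical in
/-- The symmetric PSD square root of a PSD matrix (junk value `0` otherwise). -/
noncomputable def psdSqrt {n : ℕ} (A : Matrix (Fin n) (Fin n) ℝ) : Matrix (Fin n) (Fin n) ℝ :=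
  if h : A.PosSemidef then
    (h.1.eigenvectorUnitary : Matrix (Fin n) (Fin n) ℝ) *
      Matrix.diagonal ((RCLike.ofReal : ℝ → ℝ) ∘ Real.sqrt ∘ h.1.eigenvalues) *
      (star h.1.eigenvectorUnitary : Matrix (Fin n) (Fin n) ℝ)
  else 0

/-- The four Moore-Penrose conditions: `B` is the Moore-Penrose pseudoinverse of `A`. -/
def IsMoorePenrose {m k : ℕ} (A : Matrix (Fin m) (Fin k) ℝ) (B : Matrix (Fin k) (Fin m) ℝ) :
    Prop :=
  A * B * A = A ∧ B * A * B = B ∧ (A * B)ᵀ = A * B ∧ (B * A)ᵀ = B * A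

/-!
With `S = D^{1/2}` and `X = U S`, every matrix in the formula is a conjugate `U M Uᵀ` of a
`k × k` matrix by the isometry `U`, and such conjugation commutes with the PSD square root and
turns an inverse into the Moore-Penrose inverse. Hence `Σ^{1/2} = U S Uᵀ`,
`Σ^{1/2} Λ Σ^{1/2} = U (Xᵀ Λ X) Uᵀ` has square root `U H Uᵀ` and pseudoinverse `U H⁻¹ Uᵀ`, and
the right-hand side collapses to `U S H⁻¹ S Uᵀ Λ = X H⁻¹ Xᵀ Y Yᵀ`. Invertibility of `H` comes
from `ΣΛ = X (Xᵀ Y) Yᵀ`: rank `k` forces `N = Xᵀ Y` to be invertible, and `H² = N Nᵀ`.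
-/

open scoped MatrixOrder

section PsdSqrt

variable {n : ℕ} {A : Matrix (Fin n) (Fin n) ℝ}

lemma psdSqrt_eq_cfcSqrt (hA : A.PosSemidef) : psdSqrt A = CFC.sqrt A := by
  rw [CFC.sqrt_eq_cfc, cfc_nnreal_eq_real _ A, hA.1.cfc_eq, psdSqrt, dif_pos hA]
  simp only [IsHermitian.cfc, Unitary.conjStarAlgAut_apply, Real.coe_sqrt, Real.coe_toNNReal']
  congr 3
  funext i
  simp [max_eq_left (hA.eigenvalues_nonneg i)]

lemma psdSqrt_eq_of_sq_eq {S : Matrix (Fin n) (Fin n) ℝ} (hA : A.PosSemidef)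
    (hS : S.PosSemidef) (h : S ^ 2 = A) : psdSqrt A = S := by
  rw [psdSqrt_eq_cfcSqrt hA, CFC.sqrt_eq_iff A S hA.nonneg hS.nonneg, ← h, sq]

lemma posSemidef_psdSqrt (hA : A.PosSemidef) : (psdSqrt A).PosSemidef := by
  rw [psdSqrt_eq_cfcSqrt hA]
  exact (CFC.sqrt_nonneg A).posSemidef

lemma psdSqrt_sq (hA : A.PosSemidef) : psdSqrt A ^ 2 = A := by
  rw [psdSqrt_eq_cfcSqrt hA]
  exact CFC.sq_sqrt A hA.nonneg

lemma transpose_psdSqrt (hA : A.PosSemidef) : (psdSqrt A)ᵀ = psdSqrt A := by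
  simpa only [conjTranspose_eq_transpose_of_trivial] using (posSemidef_psdSqrt hA).1.eq

lemma isUnit_psdSqrt (hA : A.PosSemidef) (hu : IsUnit A) : IsUnit (psdSqrt A) := by
  rw [isUnit_iff_isUnit_det] at hu ⊢
  rwa [← psdSqrt_sq hA, det_pow, isUnit_pow_iff two_ne_zero] at hu

end PsdSqrt

section OrthonormalColumns

variable {n k : ℕ} {U : Matrix (Fin n) (Fin k) ℝ}

lemma conj_mul_conj_of_orthonormal (hU : Uᵀ * U = 1) (M N : Matrix (Fin k) (Fin k) ℝ) :
    U * M * Uᵀ * (U * N * Uᵀ) = U * (M * N) * Uᵀ := by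
  simp only [Matrix.mul_assoc]
  rw [← Matrix.mul_assoc Uᵀ U, hU, Matrix.one_mul]

lemma psdSqrt_conj_of_orthonormal (hU : Uᵀ * U = 1) {M : Matrix (Fin k) (Fin k) ℝ}
    (hM : M.PosSemidef) : psdSqrt (U * M * Uᵀ) = U * psdSqrt M * Uᵀ := by
  have conj_psd {N : Matrix (Fin k) (Fin k) ℝ} (hN : N.PosSemidef) : (U * N * Uᵀ).PosSemidef := by
    simpa only [conjTranspose_eq_transpose_of_trivial] using hN.mul_mul_conjTranspose_same U
  refine psdSqrt_eq_of_sq_eq (conj_psd hM) (conj_psd (posSemidef_psdSqrt hM)) ?_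
  rw [sq, conj_mul_conj_of_orthonormal hU, ← sq, psdSqrt_sq hM]

end OrthonormalColumns

lemma isUnit_of_card_le_rank {ι K : Type*} [Fintype ι] [DecidableEq ι] [Field K]
    {N : Matrix ι ι K} (h : Fintype.card ι ≤ N.rank) : IsUnit N := by
  rw [← mulVec_surjective_iff_isUnit]
  have hrange : LinearMap.range N.mulVecLin = ⊤ :=
    Submodule.eq_top_of_finrank_eq (by simpa [rank] using (rank_le_card_width N).antisymm h)
  exact LinearMap.range_eq_top.mp hrange

section MoorePenrose

variable {m k : ℕ}

lemma IsMoorePenrose.unique {A : Matrix (Fin m) (Fin k) ℝ} {B C : Matrix (Fin k) (Fin m) ℝ}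
    (hB : IsMoorePenrose A B) (hC : IsMoorePenrose A C) : B = C := by
  obtain ⟨hB1, hB2, hB3, hB4⟩ := hB
  obtain ⟨hC1, hC2, hC3, hC4⟩ := hC
  have hAB : A * B = A * C :=
    calc A * B = A * C * (A * B) := by rw [← Matrix.mul_assoc, hC1]
      _ = (A * B * (A * C))ᵀ := by rw [transpose_mul, hC3, hB3]
      _ = A * C := by rw [← Matrix.mul_assoc, hB1, hC3]
  have hBA : B * A = C * A :=
    calc B * A = B * A * (C * A) := by rw [Matrix.mul_assoc B A, ← Matrix.mul_assoc A C A, hC1]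
      _ = (C * A * (B * A))ᵀ := by rw [transpose_mul, hC4, hB4]
      _ = C * A := by rw [Matrix.mul_assoc C A, ← Matrix.mul_assoc A B A, hB1, hC4]
  calc B = B * A * B := hB2.symm
    _ = C * A * C := by rw [Matrix.mul_assoc, hAB, ← Matrix.mul_assoc, hBA]
    _ = C := hC2

lemma isMoorePenrose_conj_of_orthonormal {U : Matrix (Fin m) (Fin k) ℝ} (hU : Uᵀ * U = 1)
    {H : Matrix (Fin k) (Fin k) ℝ} (hH : IsUnit H) :
    IsMoorePenrose (U * H * Uᵀ) (U * H⁻¹ * Uᵀ) := by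
  have hdet := (isUnit_iff_isUnit_det H).mp hH
  refine ⟨?_, ?_, ?_, ?_⟩
  · rw [conj_mul_conj_of_orthonormal hU, conj_mul_conj_of_orthonormal hU, mul_nonsing_inv _ hdet,
      Matrix.one_mul]
  · rw [conj_mul_conj_of_orthonormal hU, conj_mul_conj_of_orthonormal hU, nonsing_inv_mul _ hdet,
      Matrix.one_mul]
  · rw [conj_mul_conj_of_orthonormal hU, mul_nonsing_inv _ hdet, Matrix.mul_one, transpose_mul,
      transpose_transpose]
  · rw [conj_mul_conj_of_orthonormal hU, nonsing_inv_mul _ hdet, Matrix.mul_one, transpose_mul,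
      transpose_transpose]

end MoorePenrose

theorem unique_log_geodesic_formula_general (n k : ℕ) (A B : Matrix (Fin n) (Fin n) ℝ)
    (hABk : (A * B).rank = k)
    (U : Matrix (Fin n) (Fin k) ℝ) (hU : Uᵀ * U = 1)
    (d : Fin k → ℝ) (hd : ∀ i, 0 < d i)
    (hdec : A = U * Matrix.diagonal d * Uᵀ)
    (Y : Matrix (Fin n) (Fin k) ℝ) (hY : Y * Yᵀ = B)
    (X : Matrix (Fin n) (Fin k) ℝ) (hXdef : X = U * psdSqrt (Matrix.diagonal d))
    (P : Matrix (Fin n) (Fin n) ℝ)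
    (hP : IsMoorePenrose (psdSqrt (psdSqrt A * B * psdSqrt A)) P) :
    X * ((psdSqrt (Xᵀ * B * X))⁻¹ * (Xᵀ * Y)) * Yᵀ
      = psdSqrt A * P * psdSqrt A * B := by
  subst hdec hY hXdef
  have hD : (diagonal d).PosSemidef := posSemidef_diagonal_iff.mpr fun i => (hd i).le
  rw [psdSqrt_conj_of_orthonormal hU hD] at hP ⊢
  rw [← psdSqrt_sq hD, sq] at hABk
  have hSt := transpose_psdSqrt hD
  generalize psdSqrt (diagonal d) = S at *
  set N := (U * S)ᵀ * Y with hN_def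
  have hN : IsUnit N := by
    refine isUnit_of_card_le_rank ?_
    calc Fintype.card (Fin k) = (U * (S * S) * Uᵀ * (Y * Yᵀ)).rank := by simp [hABk]
      _ = (U * S * (N * Yᵀ)).rank := by rw [hN_def, transpose_mul, hSt]; simp only [Matrix.mul_assoc]
      _ ≤ N.rank := (rank_mul_le_right _ _).trans (rank_mul_le_left _ _)
  have hM : (U * S)ᵀ * (Y * Yᵀ) * (U * S) = N * Nᵀ := by
    simp only [hN_def, transpose_mul, transpose_transpose, Matrix.mul_assoc]
  have hMpsd : (N * Nᵀ).PosSemidef := by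
    simpa only [conjTranspose_eq_transpose_of_trivial] using posSemidef_self_mul_conjTranspose N
  have hH : IsUnit (psdSqrt (N * Nᵀ)) :=
    isUnit_psdSqrt hMpsd (hN.mul ((isUnit_transpose N).mpr hN))
  have hSBS : U * S * Uᵀ * (Y * Yᵀ) * (U * S * Uᵀ) = U * (N * Nᵀ) * Uᵀ := by
    rw [← hM, transpose_mul, hSt]; simp only [Matrix.mul_assoc]
  rw [hSBS, psdSqrt_conj_of_orthonormal hU hMpsd] at hP
  rw [hM, hP.unique (isMoorePenrose_conj_of_orthonormal hU hH), conj_mul_conj_of_orthonormal hU,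
    conj_mul_conj_of_orthonormal hU, hN_def, transpose_mul, hSt]
  simp only [Matrix.mul_assoc]

theorem unique_log_geodesic_formula (n k : ℕ) (A B : Matrix (Fin n) (Fin n) ℝ)
    (hA : A.PosSemidef) (hB : B.PosSemidef)
    (hAk : A.rank = k) (hBk : B.rank = k) (hABk : (A * B).rank = k)
    (U : Matrix (Fin n) (Fin k) ℝ) (hU : Uᵀ * U = 1)
    (d : Fin k → ℝ) (hd : ∀ i, 0 < d i)
    (hdec : A = U * Matrix.diagonal d * Uᵀ)
    (Y : Matrix (Fin n) (Fin k) ℝ) (hY : Y * Yᵀ = B) (hYrank : Y.rank = k)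
    (X : Matrix (Fin n) (Fin k) ℝ) (hXdef : X = U * psdSqrt (Matrix.diagonal d))
    (P : Matrix (Fin n) (Fin n) ℝ)
    (hP : IsMoorePenrose (psdSqrt (psdSqrt A * B * psdSqrt A)) P) :
    X * ((psdSqrt (Xᵀ * B * X))⁻¹ * (Xᵀ * Y)) * Yᵀ
      = psdSqrt A * P * psdSqrt A * B :=
  unique_log_geodesic_formula_general n k A B hABk U hU d hd hdec Y hY X hXdef P hP
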